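/- arXiv:2603.10689 — 2 statements merged into one kernel-verified Lean document; each statement's English description precedes it below -/
import Mathlib

section
/- Let S : ℝ^d → ℝ^K be differentiable with derivative operator norm (ℓ∞-induced) bounded by γ > 0 everywhere on a convex set U. Let z, z' ∈ U with ‖z − z'‖_∞ < ε/γ, and suppose S(z') has a classification margin: S(z')_y − max_{i ≠ y} S(z')_i > 2ε at some index y. Then argmax_i S(z)_i = y. -/
/-- If `S` is differentiable on a convex set `U` with ℓ∞-induced derivative operator
norm bounded by `γ > 0`, `z, z' ∈ U` with `‖z - z'‖_∞ < ε/γ`, and `S z'` has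
classification margin `> 2ε` at index `y`, then the argmax of `S z` is `y`. -/
theorem argmax_transfer_of_close
    (d K : ℕ) (hK : 2 ≤ K) (S : (Fin d → ℝ) → (Fin K → ℝ))
    (U : Set (Fin d → ℝ)) (hU : Convex ℝ U)
    (hS : DifferentiableOn ℝ S U)
    (γ ε : ℝ) (hγ : 0 < γ) (hε : 0 < ε)
    (hbound : ∀ u ∈ U, ‖fderivWithin ℝ S U u‖ ≤ γ)
    (z z' : Fin d → ℝ) (hz : z ∈ U) (hz' : z' ∈ U)
    (hdist : ‖z - z'‖ < ε / γ)
    (y : Fin K) (hmargin : ∀ i, i ≠ y → S z' y - S z' i > 2 * ε) :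
    ∀ i, i ≠ y → S z i < S z y := by
  have hlip : ‖S z - S z'‖ ≤ γ * ‖z - z'‖ :=
    hU.norm_image_sub_le_of_norm_fderivWithin_le hS hbound hz' hz
  have hlt : ‖S z - S z'‖ < ε := by
    calc ‖S z - S z'‖ ≤ γ * ‖z - z'‖ := hlip
    _ < γ * (ε / γ) := by exact mul_lt_mul_of_pos_left hdist hγ
    _ = ε := by field_simp
  intro i hi
  have hcoord : ∀ j : Fin K, |S z j - S z' j| < ε := by
    intro j
    have := norm_le_pi_norm (S z - S z') j
    simp only [Pi.sub_apply, Real.norm_eq_abs] at this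
    linarith
  have h1 := abs_lt.mp (hcoord i)
  have h2 := abs_lt.mp (hcoord y)
  have := hmargin i hi
  linarith [h1.2, h2.1]
end

section
/- Let S : ℝ^d → ℝ^K be differentiable on a convex set U with ‖DS(u)‖_{op,∞} ≤ γ for all u ∈ U. Suppose z_{j-1}, z_j ∈ U with ‖z_j − z_{j-1}‖_∞ < ε/γ, S has margin 2ε at z_{j-1} with top class c = argmax_i S(z_{j-1})_i, and argmax_i S(z_j)_i ≠ c. Then a contradiction follows; equivalently, under the distance and margin hypotheses, argmax_i S(z_j)_i = c necessarily. -/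
/-- Key step of the CAC convergence proof: if `S` is differentiable on a convex
set `U` with ℓ∞-induced derivative operator norm bounded by `γ`, the consecutive
adversarial examples `zprev, zcur ∈ U` satisfy `‖zcur - zprev‖_∞ < ε/γ`, and `S`
has margin `2ε` at `zprev` with top class `c`, then the prediction of `S` at
`zcur` must also be `c` (its strict argmax is `c`); in particular assuming the
argmax at `zcur` differs from `c` yields a contradiction. -/
theorem CAC_key_step_prediction_agrees
    (d K : ℕ) (hK : 2 ≤ K) (S : (Fin d → ℝ) → (Fin K → ℝ))
    (U : Set (Fin d → ℝ)) (hU : Convex ℝ U)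
    (hS : DifferentiableOn ℝ S U)
    (γ ε : ℝ) (hγ : 0 < γ) (hε : 0 < ε)
    (hbound : ∀ u ∈ U, ‖fderivWithin ℝ S U u‖ ≤ γ)
    (zprev zcur : Fin d → ℝ) (hzp : zprev ∈ U) (hzc : zcur ∈ U)
    (hdist : ‖zcur - zprev‖ < ε / γ)
    (c : Fin K) (hmargin : ∀ i, i ≠ c → S zprev c - S zprev i > 2 * ε) :
    ∀ i, i ≠ c → S zcur i < S zcur c := by
  have key : ‖S zcur - S zprev‖ ≤ γ * ‖zcur - zprev‖ :=
    hU.norm_image_sub_le_of_norm_fderivWithin_le hS hbound hzp hzc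
  have hlt : ‖S zcur - S zprev‖ < ε := by
    calc ‖S zcur - S zprev‖ ≤ γ * ‖zcur - zprev‖ := key
    _ < γ * (ε / γ) := by exact mul_lt_mul_of_pos_left hdist hγ
    _ = ε := by field_simp
  intro i hi
  have hcoord : ∀ j, |S zcur j - S zprev j| < ε := by
    intro j
    have := norm_le_pi_norm (S zcur - S zprev) j
    simp only [Pi.sub_apply, Real.norm_eq_abs] at this
    linarith
  have h1 := abs_lt.mp (hcoord i)
  have h2 := abs_lt.mp (hcoord c)
  have := hmargin i hi
  linarith [h1.2, h2.1]
end
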